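/- arXiv:1503.09067 — 7 statements merged into one kernel-verified Lean document; each statement's English description precedes it below -/
import Mathlib

section
/- Let ι be a countable type, a, b : ι → ℝ, (x₁, y₁), (x₂, y₂) ∈ ℝ², and t ∈ [0,1]. If the families i ↦ exp(−(x₁·a i + y₁·b i)) and i ↦ exp(−(x₂·a i + y₂·b i)) are both summable, then the family i ↦ exp(−((t·x₁ + (1−t)·x₂)·a i + (t·y₁ + (1−t)·y₂)·b i)) is summable. -/
/-- Hölder-inequality convexity of the convergence region of the two-parameter
Poincaré series (convexity of the Manhattan curve). -/
theorem manhattan_convexity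
    (ι : Type*) [Countable ι]
    (a b : ι → ℝ) (x₁ y₁ x₂ y₂ t : ℝ)
    (ht : t ∈ Set.Icc (0 : ℝ) 1)
    (h₁ : Summable fun i => Real.exp (-(x₁ * a i + y₁ * b i)))
    (h₂ : Summable fun i => Real.exp (-(x₂ * a i + y₂ * b i))) :
    Summable fun i =>
      Real.exp (-((t * x₁ + (1 - t) * x₂) * a i + (t * y₁ + (1 - t) * y₂) * b i)) := by
  obtain ⟨ht0, ht1⟩ := ht
  have ht1' : (0:ℝ) ≤ 1 - t := by linarith
  refine Summable.of_nonneg_of_le (fun i => (Real.exp_pos _).le)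
    (fun i => ?_) (((h₁.mul_left t).add (h₂.mul_left (1 - t))))
  have key : Real.exp (-((t * x₁ + (1 - t) * x₂) * a i + (t * y₁ + (1 - t) * y₂) * b i))
      = Real.exp (-(x₁ * a i + y₁ * b i)) ^ t *
        Real.exp (-(x₂ * a i + y₂ * b i)) ^ (1 - t) := by
    rw [← Real.exp_log (Real.rpow_pos_of_pos (Real.exp_pos _) t),
        ← Real.exp_log (Real.rpow_pos_of_pos (Real.exp_pos _) (1 - t)),
        ← Real.exp_add, Real.log_rpow (Real.exp_pos _), Real.log_rpow (Real.exp_pos _),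
        Real.log_exp, Real.log_exp]
    ring_nf
  rw [key]
  exact Real.geom_mean_le_arith_mean2_weighted ht0 ht1' (Real.exp_pos _).le
    (Real.exp_pos _).le (by ring)
end

section
/- Let ι be a countable type, ℓ₁, ℓ₂ : ι → ℝ strictly positive functions, x, y ≥ 0 real numbers, λ > 0 and 0 < ε < λ. Suppose the abscissa of convergence sInf { s | i ↦ exp(−s(x·ℓ₁ i + y·ℓ₂ i)) is summable } equals 1 (i.e., (x,y) lies on the Manhattan curve of (ℓ₁, ℓ₂)). Define δ(λ,ε) := sInf { s | the family i ↦ exp(−s(ℓ₁ i + ℓ₂ i)), restricted to the set C(λ,ε) := { i | |ℓ₂ i / ℓ₁ i − λ| ≤ ε }, is summable }. Then δ(λ,ε) ≤ (x + (λ+ε)·y) / (1 + λ − ε). -/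
/-- Inequality for the critical exponent restricted to the window of slopes
`[λ-ε, λ+ε]`, for a point `(x,y)` on the Manhattan curve. -/
theorem slope_window_exponent_bound
    (ι : Type*) [Countable ι]
    (ℓ₁ ℓ₂ : ι → ℝ) (h₁ : ∀ i, 0 < ℓ₁ i) (h₂ : ∀ i, 0 < ℓ₂ i)
    (x y : ℝ) (hx : 0 ≤ x) (hy : 0 ≤ y)
    (lam ε : ℝ) (hlam : 0 < lam) (hε : 0 < ε) (hlt : ε < lam)
    (hM : sInf {s : ℝ | Summable fun i => Real.exp (-s * (x * ℓ₁ i + y * ℓ₂ i))} = 1) :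
    sInf {s : ℝ | Summable fun i : {i : ι | |ℓ₂ i / ℓ₁ i - lam| ≤ ε} =>
        Real.exp (-s * (ℓ₁ i.1 + ℓ₂ i.1))} ≤ (x + (lam + ε) * y) / (1 + lam - ε) := by
  set T : Set ℝ := {s : ℝ | Summable fun i => Real.exp (-s * (x * ℓ₁ i + y * ℓ₂ i))}
  set S : Set ℝ := {s : ℝ | Summable fun i : {i : ι | |ℓ₂ i / ℓ₁ i - lam| ≤ ε} =>
        Real.exp (-s * (ℓ₁ i.1 + ℓ₂ i.1))}
  have hD : (0:ℝ) < 1 + lam - ε := by linarith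
  have hle : (0:ℝ) < lam + ε := by linarith
  -- nonnegativity of the Manhattan exponent argument
  have harg : ∀ i, 0 ≤ x * ℓ₁ i + y * ℓ₂ i := fun i => by
    have := (h₁ i).le; have := (h₂ i).le; positivity
  -- x + (λ+ε) y > 0 : otherwise x = y = 0 and sInf T = 0 ≠ 1
  have hxy : 0 < x + (lam + ε) * y := by
    rcases lt_or_eq_of_le (by positivity : (0:ℝ) ≤ x + (lam + ε) * y) with h | h
    · exact h
    · exfalso
      have hx0 : x = 0 := by nlinarith [mul_nonneg hle.le hy]
      have hy0 : y = 0 := by nlinarith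
      have hTe : T = {s : ℝ | Summable fun _ : ι => (1:ℝ)} := by
        ext s; simp [T, hx0, hy0]
      by_cases hsum : Summable fun _ : ι => (1:ℝ)
      · have : T = Set.univ := by
          rw [hTe]; ext s; simp [hsum]
        rw [this] at hM
        have : ¬ BddBelow (Set.univ : Set ℝ) := by
          intro ⟨b, hb⟩
          exact absurd (hb (Set.mem_univ (b - 1))) (by norm_num)
        rw [Real.sInf_of_not_bddBelow this] at hM
        norm_num at hM
      · have : T = ∅ := by
          rw [hTe]; ext s; simp [hsum]
        rw [this, Real.sInf_empty] at hM; norm_num at hM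
  set s₀ : ℝ := (x + (lam + ε) * y) / (1 + lam - ε) with hs₀
  have hs₀pos : 0 < s₀ := div_pos hxy hD
  -- T is nonempty and bounded below
  have hTne : T.Nonempty := by
    by_contra h
    rw [Set.not_nonempty_iff_eq_empty] at h
    rw [h, Real.sInf_empty] at hM; norm_num at hM
  have hTbdd : BddBelow T := by
    by_contra h
    rw [Real.sInf_of_not_bddBelow h] at hM; norm_num at hM
  -- any u > 1 lies in T
  have hTup : ∀ u : ℝ, 1 < u → u ∈ T := by
    intro u hu
    obtain ⟨t, htT, htu⟩ := (csInf_lt_iff hTbdd hTne).mp (by rw [hM]; exact hu)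
    refine htT.of_nonneg_of_le (fun i => (Real.exp_pos _).le) (fun i => ?_)
    apply Real.exp_le_exp.mpr
    have := harg i
    nlinarith
  -- every t > s₀ lies in S
  have hSmem : ∀ t : ℝ, s₀ < t → t ∈ S := by
    intro t ht
    have htpos : 0 < t := hs₀pos.trans ht
    set u : ℝ := t / s₀ with hu
    have hu1 : 1 < u := (one_lt_div hs₀pos).mpr ht
    have hsum : Summable fun i => Real.exp (-u * (x * ℓ₁ i + y * ℓ₂ i)) := hTup u hu1
    have hsub := hsum.subtype {i : ι | |ℓ₂ i / ℓ₁ i - lam| ≤ ε}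
    refine hsub.of_nonneg_of_le (fun i => (Real.exp_pos _).le) (fun i => ?_)
    apply Real.exp_le_exp.mpr
    obtain ⟨i, hi⟩ := i
    simp only [Set.mem_setOf_eq] at hi
    have hℓ₁ := h₁ i
    have habs := abs_le.mp hi
    have hub : ℓ₂ i ≤ (lam + ε) * ℓ₁ i := by
      have h' : ℓ₂ i / ℓ₁ i ≤ lam + ε := by linarith [habs.2]
      calc ℓ₂ i = (ℓ₂ i / ℓ₁ i) * ℓ₁ i := by field_simp
        _ ≤ (lam + ε) * ℓ₁ i := by nlinarith
    have hlb : (lam - ε) * ℓ₁ i ≤ ℓ₂ i := by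
      have h' : lam - ε ≤ ℓ₂ i / ℓ₁ i := by linarith [habs.1]
      calc (lam - ε) * ℓ₁ i ≤ (ℓ₂ i / ℓ₁ i) * ℓ₁ i := by nlinarith
        _ = ℓ₂ i := by field_simp
    -- key computation: u * (x + (λ+ε) y) = t * (1 + λ - ε)
    have hkey : u * (x + (lam + ε) * y) = t * (1 + lam - ε) := by
      rw [hu, hs₀]; field_simp
    have step1 : u * (x * ℓ₁ i + y * ℓ₂ i) ≤ u * (x + (lam + ε) * y) * ℓ₁ i := by
      have hupos : 0 < u := lt_trans one_pos hu1
      nlinarith [mul_nonneg (mul_nonneg hupos.le hy) (sub_nonneg.mpr hub)]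
    have step2 : t * (1 + lam - ε) * ℓ₁ i ≤ t * (ℓ₁ i + ℓ₂ i) := by
      nlinarith
    simp only [neg_mul, neg_le_neg_iff]
    calc u * (x * ℓ₁ i + y * ℓ₂ i) ≤ u * (x + (lam + ε) * y) * ℓ₁ i := step1
      _ = t * (1 + lam - ε) * ℓ₁ i := by rw [hkey]
      _ ≤ t * (ℓ₁ i + ℓ₂ i) := step2
  -- conclude
  by_cases hSbdd : BddBelow S
  · refine le_of_forall_gt_imp_ge_of_dense fun t ht => ?_
    exact csInf_le hSbdd (hSmem t ht)
  · rw [Real.sInf_of_not_bddBelow hSbdd]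
    exact hs₀pos.le
end

section
/- Let ι be a countable type, ℓ₁, ℓ₂ : ι → ℝ strictly positive functions, x, y ≥ 0 real numbers and λ > 0. Suppose the abscissa of convergence sInf { s | i ↦ exp(−s(x·ℓ₁ i + y·ℓ₂ i)) is summable } equals 1. For 0 < ε < λ let δ(λ,ε) := sInf { s | the family i ↦ exp(−s(ℓ₁ i + ℓ₂ i)), restricted to C(λ,ε) := { i | |ℓ₂ i / ℓ₁ i − λ| ≤ ε }, is summable }, and define the critical exponent with slope λ as δ(λ) := ⨅_{ε ∈ (0,λ)} δ(λ,ε) (which equals the limit of δ(λ,ε) as ε → 0⁺, since δ(λ,ε) is nondecreasing in ε). Then δ(λ) ≤ (x + λ·y) / (1 + λ). -/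
set_option maxHeartbeats 1000000

/-- If a family of reals all `≥ 1` is summable, the index type is finite. -/
lemma aux_finite_of_summable {κ : Type*} {f : κ → ℝ} (hf : Summable f)
    (h1 : ∀ k, 1 ≤ f k) : Finite κ := by
  by_contra h
  rw [not_finite_iff_infinite] at h
  have hc : Summable (fun _ : κ => (1 : ℝ)) :=
    Summable.of_nonneg_of_le (fun _ => zero_le_one) h1 hf
  exact one_ne_zero ((summable_const_iff (1 : ℝ)).mp hc)

/-- ℝ's `univ` is not bounded below. -/
lemma aux_not_bddBelow_univ : ¬ BddBelow (Set.univ : Set ℝ) := by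
  rintro ⟨b, hb⟩
  have := hb (Set.mem_univ (b - 1))
  linarith

/-- If a set of reals contains all reals, its `sInf` is 0. -/
lemma aux_sInf_univ : sInf (Set.univ : Set ℝ) = 0 :=
  Real.sInf_of_not_bddBelow aux_not_bddBelow_univ

/-- If the set of exponents with summable series (weights positive) contains a negative
number, then the index type is finite and the set is everything, so `sInf = 0`. -/
lemma aux_sInf_eq_zero {κ : Type*} {w : κ → ℝ} (hw : ∀ k, 0 < w k) {s : ℝ}
    (hs : Summable fun k => Real.exp (-s * w k)) (hneg : s < 0) :
    sInf {t : ℝ | Summable fun k => Real.exp (-t * w k)} = 0 := by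
  have hfin : Finite κ := by
    refine aux_finite_of_summable hs fun k => Real.one_le_exp ?_
    have := hw k
    nlinarith
  have : {t : ℝ | Summable fun k => Real.exp (-t * w k)} = Set.univ := by
    ext t; simp only [Set.mem_setOf_eq, Set.mem_univ, iff_true]
    exact Summable.of_finite
  rw [this, aux_sInf_univ]

/-- Nonnegativity of the critical exponent. -/
lemma aux_sInf_nonneg {κ : Type*} {w : κ → ℝ} (hw : ∀ k, 0 < w k) :
    0 ≤ sInf {t : ℝ | Summable fun k => Real.exp (-t * w k)} := by
  by_cases h : ∃ s ∈ {t : ℝ | Summable fun k => Real.exp (-t * w k)}, s < 0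
  · obtain ⟨s, hs, hneg⟩ := h
    rw [aux_sInf_eq_zero hw hs hneg]
  · push_neg at h
    exact Real.sInf_nonneg h

/-- The critical exponent with slope `λ` is bounded by `(x + λy)/(1+λ)` for every
point `(x,y)` on the Manhattan curve. -/
theorem slope_exponent_bound
    (ι : Type*) [Countable ι]
    (ℓ₁ ℓ₂ : ι → ℝ) (h₁ : ∀ i, 0 < ℓ₁ i) (h₂ : ∀ i, 0 < ℓ₂ i)
    (x y : ℝ) (hx : 0 ≤ x) (hy : 0 ≤ y)
    (lam : ℝ) (hlam : 0 < lam)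
    (hM : sInf {s : ℝ | Summable fun i => Real.exp (-s * (x * ℓ₁ i + y * ℓ₂ i))} = 1) :
    (sInf ((fun ε => sInf {s : ℝ | Summable fun i : {i : ι | |ℓ₂ i / ℓ₁ i - lam| ≤ ε} =>
          Real.exp (-s * (ℓ₁ i.1 + ℓ₂ i.1))}) '' (Set.Ioo (0 : ℝ) lam))) ≤ (x + lam * y) / (1 + lam) := by
  set S := {s : ℝ | Summable fun i => Real.exp (-s * (x * ℓ₁ i + y * ℓ₂ i))} with hS
  have h1lam : (0:ℝ) < 1 + lam := by linarith
  set A := (x + lam * y) / (1 + lam) with hA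
  have hA0 : 0 ≤ A := div_nonneg (by nlinarith) h1lam.le
  -- x + y must be positive, else hM fails
  have hxy : 0 < x + y := by
    rcases lt_or_ge 0 (x + y) with h | h
    · exact h
    · exfalso
      have hx0 : x = 0 := by linarith
      have hy0 : y = 0 := by linarith
      have hSS : S = {s : ℝ | Summable fun _ : ι => (1:ℝ)} := by
        ext t; simp [hS, hx0, hy0]
      cases finite_or_infinite ι with
      | inl hfin =>
        have : S = Set.univ := by
          rw [hSS]; ext t; simp only [Set.mem_setOf_eq, Set.mem_univ, iff_true]
          exact Summable.of_finite
        rw [this, aux_sInf_univ] at hM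
        exact one_ne_zero hM.symm
      | inr hinf =>
        have : S = ∅ := by
          rw [hSS]; ext t
          simp only [Set.mem_setOf_eq, Set.mem_empty_iff_false, iff_false]
          intro hc
          exact one_ne_zero ((summable_const_iff (1 : ℝ)).mp hc)
        rw [this, Real.sInf_empty] at hM
        exact one_ne_zero hM.symm
  have hw : ∀ i, 0 < x * ℓ₁ i + y * ℓ₂ i := by
    intro i
    have hl1 := h₁ i; have hl2 := h₂ i
    rcases lt_or_ge 0 x with hx' | hx'
    · nlinarith
    · have : x = 0 := le_antisymm hx' hx
      have hy' : 0 < y := by linarith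
      nlinarith
  -- members of S are nonnegative
  have hSnonneg : ∀ t ∈ S, 0 ≤ t := by
    intro t ht
    by_contra hneg
    push_neg at hneg
    rw [aux_sInf_eq_zero hw ht hneg] at hM
    exact one_ne_zero hM.symm
  have hSne : S.Nonempty := by
    by_contra h
    rw [Set.not_nonempty_iff_eq_empty] at h
    rw [h, Real.sInf_empty] at hM
    exact one_ne_zero hM.symm
  -- for every η₁ > 0 there is t ∈ S with t < 1 + η₁
  have hSclose : ∀ η₁ : ℝ, 0 < η₁ → ∃ t ∈ S, t < 1 + η₁ := by
    intro η₁ hη₁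
    by_contra h
    push_neg at h
    have : 1 + η₁ ≤ sInf S := le_csInf hSne h
    rw [hM] at this; linarith
  -- abbreviation for the restricted critical exponent
  set g : ℝ → ℝ := fun ε =>
    sInf {s : ℝ | Summable fun i : {i : ι | |ℓ₂ i / ℓ₁ i - lam| ≤ ε} =>
      Real.exp (-s * (ℓ₁ i.1 + ℓ₂ i.1))} with hg
  have hgnonneg : ∀ ε : ℝ, 0 ≤ g ε := by
    intro ε
    exact aux_sInf_nonneg (w := fun i : {i : ι | |ℓ₂ i / ℓ₁ i - lam| ≤ ε} => ℓ₁ i.1 + ℓ₂ i.1)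
      (fun i => by have := h₁ i.1; have := h₂ i.1; linarith)
  -- main estimate
  have key : ∀ η : ℝ, 0 < η →
      sInf (g '' Set.Ioo (0:ℝ) lam) ≤ A + η := by
    intro η hη
    set η' := min η 1 with hη'def
    have hη'pos : 0 < η' := lt_min hη one_pos
    have hη'le1 : η' ≤ 1 := min_le_right _ _
    have hη'leη : η' ≤ η := min_le_left _ _
    -- choose parameters
    set η₁ := η' / (4 * (A + 1)) with hη₁def
    have hη₁pos : 0 < η₁ := by positivity
    have hη₁le : η₁ ≤ 1 / 4 := by
      rw [hη₁def, div_le_div_iff₀ (by positivity) (by norm_num)]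
      nlinarith
    set ε := min (lam / 2) (η' / (8 * (|x - y| + 1))) with hεdef
    have habs : (0:ℝ) ≤ |x - y| := abs_nonneg _
    have hεpos : 0 < ε := lt_min (by linarith) (by positivity)
    have hεlt : ε < lam := lt_of_le_of_lt (min_le_left _ _) (by linarith)
    have hεmem : ε ∈ Set.Ioo (0:ℝ) lam := ⟨hεpos, hεlt⟩
    have hεsmall : ε * |x - y| ≤ η' / 8 := by
      have h1 : ε ≤ η' / (8 * (|x - y| + 1)) := min_le_right _ _
      have h2 : ε * |x - y| ≤ η' / (8 * (|x - y| + 1)) * |x - y| :=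
        mul_le_mul_of_nonneg_right h1 habs
      have h3 : η' / (8 * (|x - y| + 1)) * |x - y| ≤ η' / 8 := by
        rw [div_mul_eq_mul_div, div_le_div_iff₀ (by positivity) (by norm_num)]
        nlinarith
      linarith
    obtain ⟨t, htS, htlt⟩ := hSclose η₁ hη₁pos
    have ht0 : 0 ≤ t := hSnonneg t htS
    set s := t * (A + ε * |x - y|) with hsdef
    -- s is in the restricted summable set
    have hsmem : Summable fun i : {i : ι | |ℓ₂ i / ℓ₁ i - lam| ≤ ε} =>
        Real.exp (-s * (ℓ₁ i.1 + ℓ₂ i.1)) := by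
      have hts : Summable fun i : {i : ι | |ℓ₂ i / ℓ₁ i - lam| ≤ ε} =>
          Real.exp (-t * (x * ℓ₁ i.1 + y * ℓ₂ i.1)) :=
        htS.subtype {i : ι | |ℓ₂ i / ℓ₁ i - lam| ≤ ε}
      refine Summable.of_nonneg_of_le (fun i => (Real.exp_pos _).le) (fun i => ?_) hts
      rw [Real.exp_le_exp]
      have hL1 := h₁ i.1
      have hL2 := h₂ i.1
      have hri : |ℓ₂ i.1 / ℓ₁ i.1 - lam| ≤ ε := i.2
      set L1 := ℓ₁ i.1
      set L2 := ℓ₂ i.1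
      have hriL : |L2 - lam * L1| ≤ ε * L1 := by
        have : L2 / L1 - lam = (L2 - lam * L1) / L1 := by field_simp
        rw [this, abs_div, abs_of_pos hL1, div_le_iff₀ hL1] at hri
        linarith
      -- goal : -s * (L1 + L2) ≤ -t * (x*L1 + y*L2)
      have hprod : (x - y) * (lam * L1 - L2) ≤ |x - y| * (ε * L1) := by
        calc (x - y) * (lam * L1 - L2) ≤ |(x - y) * (lam * L1 - L2)| := le_abs_self _
        _ = |x - y| * |lam * L1 - L2| := abs_mul _ _
        _ ≤ |x - y| * (ε * L1) := by
            refine mul_le_mul_of_nonneg_left ?_ habs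
            rw [abs_sub_comm] at hriL
            exact hriL
      have hstep : |x - y| * (ε * L1) ≤ ε * |x - y| * ((1 + lam) * (L1 + L2)) := by
        have h0 : 0 ≤ ε * |x - y| := mul_nonneg hεpos.le habs
        nlinarith [mul_nonneg h0 (show (0:ℝ) ≤ (1 + lam) * (L1 + L2) - L1 by nlinarith)]
      have hid : (1 + lam) * (x * L1 + y * L2) - (x + lam * y) * (L1 + L2)
          = (x - y) * (lam * L1 - L2) := by ring
      have hmul : (1 + lam) * (x * L1 + y * L2) ≤
          (x + lam * y) * (L1 + L2) + ε * |x - y| * ((1 + lam) * (L1 + L2)) := by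
        linarith [hprod, hstep, hid]
      have hAval : A * (1 + lam) = x + lam * y := div_mul_cancel₀ _ (ne_of_gt h1lam)
      have hid2 : (1 + lam) * ((A + ε * |x - y|) * (L1 + L2))
          = (A * (1 + lam)) * (L1 + L2) + ε * |x - y| * ((1 + lam) * (L1 + L2)) := by ring
      rw [hAval] at hid2
      have h5 : (1 + lam) * (x * L1 + y * L2) ≤ (1 + lam) * ((A + ε * |x - y|) * (L1 + L2)) := by
        linarith [hmul, hid2]
      have hmain : x * L1 + y * L2 ≤ (A + ε * |x - y|) * (L1 + L2) :=
        le_of_mul_le_mul_left h5 h1lam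
      have h6 := mul_le_mul_of_nonneg_left hmain ht0
      have hid3 : t * ((A + ε * |x - y|) * (L1 + L2)) = (t * (A + ε * |x - y|)) * (L1 + L2) := by
        ring
      rw [hsdef]
      linarith [h6, hid3]
    -- hence g ε ≤ s
    have hgle : g ε ≤ s := by
      by_cases hb : BddBelow {s : ℝ | Summable fun i : {i : ι | |ℓ₂ i / ℓ₁ i - lam| ≤ ε} =>
          Real.exp (-s * (ℓ₁ i.1 + ℓ₂ i.1))}
      · exact csInf_le hb hsmem
      · rw [hg]
        dsimp only
        rw [Real.sInf_of_not_bddBelow hb]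
        have : 0 ≤ A + ε * |x - y| := by positivity
        exact mul_nonneg ht0 this
    -- and s ≤ A + η
    have hsle : s ≤ A + η := by
      have hAE : 0 ≤ A + ε * |x - y| := add_nonneg hA0 (mul_nonneg hεpos.le habs)
      have h1 : s ≤ (1 + η₁) * (A + ε * |x - y|) :=
        mul_le_mul_of_nonneg_right htlt.le hAE
      have hA1 : (0:ℝ) < A + 1 := by linarith
      have hη₁A : η₁ * (A + 1) = η' / 4 := by
        rw [hη₁def, div_mul_eq_mul_div, mul_comm (4:ℝ) (A + 1), mul_comm η' (A + 1),
          mul_div_mul_left _ _ (ne_of_gt hA1)]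
      have hq : η₁ * A ≤ η' / 4 := by nlinarith [hη₁A, hη₁pos.le]
      have hp : η₁ * (ε * |x - y|) ≤ (1 / 4) * (η' / 8) :=
        mul_le_mul hη₁le hεsmall (mul_nonneg hεpos.le habs) (by norm_num)
      have hexp : (1 + η₁) * (A + ε * |x - y|)
          = A + ε * |x - y| + η₁ * A + η₁ * (ε * |x - y|) := by ring
      have h2 : (1 + η₁) * (A + ε * |x - y|) ≤ A + η' := by
        linarith [hεsmall, hq, hp, hexp, hη'pos]
      linarith
    calc sInf (g '' Set.Ioo (0:ℝ) lam)
        ≤ g ε := csInf_le ⟨0, by rintro v ⟨e, -, rfl⟩; exact hgnonneg e⟩ (Set.mem_image_of_mem g hεmem)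
      _ ≤ A + η := le_trans hgle hsle
  exact le_of_forall_pos_le_add key
end

section
/- Let q : ℝ → ℝ be twice differentiable with q''(x) > 0 and q'(x) < 0 for all x, and let δ ∈ ℝ satisfy q(δ) = δ. Then for every x ≠ δ, (x·q'(x) − q(x)) / (q'(x) − 1) < δ, while at x = δ the left-hand side equals δ. -/
/-- The directional critical exponent `(x q'(x) - q(x))/(q'(x) - 1)` along the
Manhattan curve is maximized strictly at the diagonal point `x = δ`. -/
theorem directional_exponent_strict_max
    (q q' q'' : ℝ → ℝ)
    (hderiv : ∀ x, HasDerivAt q (q' x) x)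
    (hderiv' : ∀ x, HasDerivAt q' (q'' x) x)
    (hconvex : ∀ x, 0 < q'' x)
    (hdec : ∀ x, q' x < 0)
    (δ : ℝ) (hfix : q δ = δ) :
    (∀ x : ℝ, x ≠ δ → (x * q' x - q x) / (q' x - 1) < δ) ∧
      (δ * q' δ - q δ) / (q' δ - 1) = δ := by
  have hmono : StrictMono q' := by
    apply strictMono_of_deriv_pos
    intro x
    rw [(hderiv' x).deriv]
    exact hconvex x
  have hcont : Continuous q := (hderiv · |>.differentiableAt) |> Differentiable.continuous
  -- strict tangent line inequality
  have htan : ∀ x : ℝ, x ≠ δ → q' x * (δ - x) < q δ - q x := by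
    intro x hx
    rcases lt_or_gt_of_ne hx with h | h
    · obtain ⟨c, hc, hceq⟩ := exists_hasDerivAt_eq_slope q q' h
        (hcont.continuousOn) (fun t _ => hderiv t)
      have hlt : q' x < q' c := hmono hc.1
      have hpos : (0:ℝ) < δ - x := by linarith
      rw [eq_div_iff (by linarith : δ - x ≠ 0)] at hceq
      nlinarith
    · obtain ⟨c, hc, hceq⟩ := exists_hasDerivAt_eq_slope q q' h
        (hcont.continuousOn) (fun t _ => hderiv t)
      have hlt : q' c < q' x := hmono hc.2
      have hpos : (0:ℝ) < x - δ := by linarith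
      rw [eq_div_iff (by linarith : x - δ ≠ 0)] at hceq
      nlinarith
  have hne : ∀ x : ℝ, q' x - 1 < 0 := fun x => by have := hdec x; linarith
  constructor
  · intro x hx
    rw [div_lt_iff_of_neg (hne x)]
    have := htan x hx
    nlinarith
  · rw [hfix]
    rw [div_eq_iff (by have := hne δ; linarith : q' δ - 1 ≠ 0)]
    ring
end

section
/- Let f : ℝ → ℝ be uniformly continuous and suppose that for every t ∈ [0,1) the limit of the sequence n ↦ f(t + n) (n ∈ ℕ) exists. Then for every t ∈ ℝ the limit F(t) := lim_{n→∞} f(t + n) exists, the function F : ℝ → ℝ is continuous and 1-periodic (F(t+1) = F(t) for all t), and f(t) − F(t) → 0 as t → +∞. -/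
open Filter

/-- Shifting the start of the sequence `n ↦ f (s + n)` by an integer does not
change its limit. -/
lemma ucpl_shift (f : ℝ → ℝ) (s L : ℝ) (m : ℤ)
    (h : Tendsto (fun n : ℕ => f (s + n)) atTop (nhds L)) :
    Tendsto (fun n : ℕ => f (s + m + n)) atTop (nhds L) := by
  have h1 : Tendsto (fun n : ℕ => (m + (n : ℤ)).toNat) atTop atTop := by
    refine tendsto_atTop_atTop.mpr fun b => ⟨b + (-m).toNat, fun n hn => ?_⟩
    omega
  have h2 := h.comp h1
  refine h2.congr' ?_
  filter_upwards [eventually_ge_atTop (-m).toNat] with n hn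
  have hnn : (0 : ℤ) ≤ m + n := by omega
  have : (((m + (n : ℤ)).toNat : ℤ) : ℝ) = (m : ℝ) + n := by
    rw [Int.toNat_of_nonneg hnn]; push_cast; ring
  simp only [Function.comp]
  rw [show ((((m + (n : ℤ)).toNat : ℕ)) : ℝ) = (m : ℝ) + n by exact_mod_cast this]
  ring_nf

/-- If `f` is uniformly continuous and `f(t+n)` converges for every `t ∈ [0,1)`,
then the pointwise limit `F` exists everywhere, is continuous and 1-periodic, and
`f(t) - F(t) → 0` as `t → +∞`. -/
theorem uniformly_continuous_periodic_limit
    (f : ℝ → ℝ) (hf : UniformContinuous f)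
    (hlim : ∀ t ∈ Set.Ico (0 : ℝ) 1,
      ∃ L : ℝ, Tendsto (fun n : ℕ => f (t + n)) atTop (nhds L)) :
    ∃ F : ℝ → ℝ,
      (∀ t : ℝ, Tendsto (fun n : ℕ => f (t + n)) atTop (nhds (F t))) ∧
      Continuous F ∧
      (∀ t : ℝ, F (t + 1) = F t) ∧
      Tendsto (fun t : ℝ => f t - F t) atTop (nhds 0) := by
  -- the limit exists for every `t`
  have hF : ∀ t : ℝ, ∃ L : ℝ, Tendsto (fun n : ℕ => f (t + n)) atTop (nhds L) := by
    intro t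
    obtain ⟨L, hL⟩ := hlim (Int.fract t) ⟨Int.fract_nonneg t, Int.fract_lt_one t⟩
    refine ⟨L, ?_⟩
    have := ucpl_shift f (Int.fract t) L ⌊t⌋ hL
    exact this.congr fun n => by rw [Int.fract_add_floor]
  set F : ℝ → ℝ := fun t => (hF t).choose with hFdef
  have hFt : ∀ t : ℝ, Tendsto (fun n : ℕ => f (t + n)) atTop (nhds (F t)) :=
    fun t => (hF t).choose_spec
  -- periodicity
  have hper : ∀ t : ℝ, F (t + 1) = F t := by
    intro t
    have h1 : Tendsto (fun n : ℕ => f (t + 1 + n)) atTop (nhds (F t)) := by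
      have := (hFt t).comp (tendsto_add_atTop_nat 1)
      refine this.congr fun n => ?_
      simp only [Function.comp]
      push_cast
      ring_nf
    exact tendsto_nhds_unique (hFt (t + 1)) h1
  have hperN : ∀ (n : ℕ) (t : ℝ), F (t + n) = F t := by
    intro n
    induction n with
    | zero => simp
    | succ k ih =>
      intro t
      have : (t : ℝ) + (k + 1 : ℕ) = (t + k) + 1 := by push_cast; ring
      rw [this, hper, ih]
  -- `F` is uniformly continuous
  have hfm := Metric.uniformContinuous_iff.mp hf
  have hFuc : UniformContinuous F := by
    rw [Metric.uniformContinuous_iff]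
    intro ε hε
    obtain ⟨δ, hδ, hδ'⟩ := hfm (ε / 2) (by linarith)
    refine ⟨δ, hδ, fun {a b} hab => ?_⟩
    have hd : Tendsto (fun n : ℕ => dist (f (a + n)) (f (b + n))) atTop
        (nhds (dist (F a) (F b))) := (hFt a).dist (hFt b)
    have hle : dist (F a) (F b) ≤ ε / 2 := by
      refine le_of_tendsto hd (Eventually.of_forall fun n => ?_)
      have : dist (a + (n : ℝ)) (b + n) < δ := by
        simpa [Real.dist_eq, add_sub_add_right_eq_sub] using hab
      exact (hδ' this).le
    linarith
  -- uniform convergence on `[0,1]`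
  have key : ∀ ε > (0 : ℝ), ∃ N : ℕ, ∀ n ≥ N, ∀ s ∈ Set.Icc (0 : ℝ) 1,
      dist (f (s + n)) (F s) < ε := by
    intro ε hε
    obtain ⟨δ, hδ, hδ'⟩ := hfm (ε / 4) (by linarith)
    -- pointwise rate
    have hrate : ∀ s : ℝ, ∃ N : ℕ, ∀ n ≥ N, dist (f (s + n)) (F s) < ε / 4 :=
      fun s => Metric.tendsto_atTop.mp (hFt s) (ε / 4) (by linarith)
    choose Nf hNf using hrate
    -- finite subcover
    obtain ⟨I, hI⟩ := isCompact_Icc.elim_finite_subcover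
      (fun s : ℝ => Metric.ball s δ) (fun s => Metric.isOpen_ball)
      (fun s hs => Set.mem_iUnion.mpr ⟨s, Metric.mem_ball_self hδ⟩)
    refine ⟨I.sup Nf, fun n hn s hs => ?_⟩
    obtain ⟨i, hiI, hsi⟩ := by
      have := hI hs
      simpa using this
    have hni : n ≥ Nf i := le_trans (Finset.le_sup hiI) hn
    have h1 : dist (f (s + n)) (f (i + n)) < ε / 4 := by
      apply hδ'
      simpa [Real.dist_eq, add_sub_add_right_eq_sub] using hsi
    have h2 : dist (f (i + n)) (F i) < ε / 4 := hNf i n hni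
    have h3 : dist (F i) (F s) ≤ ε / 4 := by
      have hd : Tendsto (fun m : ℕ => dist (f (i + m)) (f (s + m))) atTop
          (nhds (dist (F i) (F s))) := (hFt i).dist (hFt s)
      refine le_of_tendsto hd (Eventually.of_forall fun m => ?_)
      refine (hδ' ?_).le
      have : dist i s < δ := by
        rw [dist_comm]; exact hsi
      simpa [Real.dist_eq, add_sub_add_right_eq_sub] using this
    calc dist (f (s + n)) (F s)
        ≤ dist (f (s + n)) (f (i + n)) + dist (f (i + n)) (F i) + dist (F i) (F s) :=
          dist_triangle4 _ _ _ _
      _ < ε / 4 + ε / 4 + ε / 4 := by linarith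
      _ < ε := by linarith
  -- conclusion
  refine ⟨F, hFt, hFuc.continuous, hper, ?_⟩
  rw [NormedAddCommGroup.tendsto_nhds_zero]
  intro ε hε
  obtain ⟨N, hN⟩ := key ε hε
  filter_upwards [eventually_ge_atTop ((N : ℝ) + 1)] with t ht
  set s := Int.fract t with hs
  set n : ℕ := ⌊t⌋.toNat with hn
  have ht0 : (0 : ℝ) ≤ t := le_trans (by positivity) ht
  have hfl : (0 : ℤ) ≤ ⌊t⌋ := Int.floor_nonneg.mpr ht0
  have hcast : ((n : ℤ) : ℝ) = (⌊t⌋ : ℝ) := by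
    rw [hn, Int.toNat_of_nonneg hfl]
  have hn' : ((n : ℕ) : ℝ) = (⌊t⌋ : ℝ) := by exact_mod_cast hcast
  have hts : t = s + n := by
    rw [hs, hn']; linarith [Int.fract_add_floor t]
  have hnN : n ≥ N := by
    have h1 : (N : ℝ) ≤ t - 1 := by linarith
    have h2 : (N : ℤ) ≤ ⌊t⌋ := by
      rw [Int.le_floor]; push_cast; linarith
    omega
  have hsI : s ∈ Set.Icc (0 : ℝ) 1 :=
    ⟨Int.fract_nonneg t, (Int.fract_lt_one t).le⟩
  have hFts : F t = F s := by
    rw [hts, hperN n s]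
  have := hN n hnN s hsI
  rw [Real.dist_eq] at this
  calc ‖f t - F t‖ = |f (s + n) - F s| := by rw [hFts, hts, Real.norm_eq_abs]
    _ < ε := this
end

section
/- Let ι be a countable type and ℓ₀ : ι → ℝ a strictly positive function such that sInf { s | i ↦ exp(−s·ℓ₀ i) is summable } = 1. For each n ∈ ℕ let ℓₙ : ι → ℝ be strictly positive, and assume that for every ε > 0 there exists N such that for all n ≥ N and all i, ℓₙ i ≤ (1+ε)·ℓ₀ i and ℓ₀ i ≤ (1+ε)·ℓₙ i (i.e., the Thurston distance log sup_i max(ℓₙ i/ℓ₀ i, ℓ₀ i/ℓₙ i) tends to 0). Then δₙ := sInf { s | i ↦ exp(−s·(ℓ₀ i + ℓₙ i)) is summable } tends to 1/2 as n → ∞. -/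
open Filter

/-- Comparison of summability of Poincaré-type series: if `s * f i ≤ t * g i`
pointwise and `∑ exp (-s * f i)` converges, then so does `∑ exp (-t * g i)`. -/
lemma summable_exp_compare {ι : Type*} {f g : ι → ℝ} {s t : ℝ}
    (h : ∀ i, s * f i ≤ t * g i)
    (hs : Summable fun i => Real.exp (-s * f i)) :
    Summable fun i => Real.exp (-t * g i) :=
  Summable.of_nonneg_of_le (fun i => (Real.exp_pos _).le)
    (fun i => Real.exp_le_exp.2 (by have := h i; simp only [neg_mul]; linarith)) hs

/-- Continuity direction of the isolation theorem: if the Thurston distance from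
`S₀` to `Sₙ` tends to `0`, then the critical exponent of the pair tends to `1/2`. -/
theorem delta_tendsto_half_of_thurston_tendsto_zero
    (ι : Type*) [Countable ι]
    (ℓ₀ : ι → ℝ) (h₀pos : ∀ i, 0 < ℓ₀ i)
    (h₀ : sInf {s : ℝ | Summable fun i => Real.exp (-s * ℓ₀ i)} = 1)
    (ℓ : ℕ → ι → ℝ) (hpos : ∀ n i, 0 < ℓ n i)
    (hth : ∀ ε : ℝ, 0 < ε → ∃ N : ℕ, ∀ n ≥ N, ∀ i,
      ℓ n i ≤ (1 + ε) * ℓ₀ i ∧ ℓ₀ i ≤ (1 + ε) * ℓ n i) :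
    Tendsto (fun n : ℕ =>
        sInf {s : ℝ | Summable fun i => Real.exp (-s * (ℓ₀ i + ℓ n i))})
      atTop (nhds (1 / 2)) := by
  set A₀ : Set ℝ := {s : ℝ | Summable fun i => Real.exp (-s * ℓ₀ i)} with hA₀def
  -- the index type is infinite (otherwise the critical exponent of ℓ₀ couldn't be 1)
  have hinf : Infinite ι := by
    cases finite_or_infinite ι with
    | inl h =>
      exfalso
      have hnb : ¬ BddBelow A₀ := by
        rintro ⟨b, hb⟩
        have hmem : (b - 1) ∈ A₀ := by
          simp only [hA₀def, Set.mem_setOf_eq]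
          exact Summable.of_finite
        have := hb hmem
        linarith
      have := Real.sInf_of_not_bddBelow hnb
      rw [h₀] at this
      norm_num at this
    | inr h => exact h
  have hA₀ne : A₀.Nonempty := by
    by_contra h
    rw [Set.not_nonempty_iff_eq_empty] at h
    rw [h, Real.sInf_empty] at h₀
    norm_num at h₀
  have hA₀bdd : BddBelow A₀ := by
    by_contra h
    rw [Real.sInf_of_not_bddBelow h] at h₀
    norm_num at h₀
  -- any exponent above 1 is summable for ℓ₀
  have hmem₀ : ∀ t : ℝ, 1 < t → Summable fun i => Real.exp (-t * ℓ₀ i) := by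
    intro t ht
    obtain ⟨a, ha, hat⟩ := exists_lt_of_csInf_lt hA₀ne (h₀ ▸ ht)
    exact summable_exp_compare
      (fun i => mul_le_mul_of_nonneg_right hat.le (h₀pos i).le) ha
  -- any summable exponent for ℓ₀ is at least 1
  have hlb₀ : ∀ s ∈ A₀, (1 : ℝ) ≤ s := fun s hs => h₀ ▸ csInf_le hA₀bdd hs
  rw [Metric.tendsto_atTop]
  intro ε hε
  obtain ⟨N, hN⟩ := hth ε hε
  refine ⟨N, fun n hn => ?_⟩
  set An : Set ℝ := {s : ℝ | Summable fun i => Real.exp (-s * (ℓ₀ i + ℓ n i))} with hAndef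
  have hεpos : (0 : ℝ) < 1 + ε := by linarith
  have h2εpos : (0 : ℝ) < 2 + ε := by linarith
  -- lower bound: every s ∈ An satisfies 1/(2+ε) ≤ s
  have hlow : ∀ s ∈ An, 1 / (2 + ε) ≤ s := by
    intro s hs
    by_cases hs0 : s ≤ 0
    · exfalso
      have h1 : ∀ i, (1 : ℝ) ≤ Real.exp (-s * (ℓ₀ i + ℓ n i)) := by
        intro i
        rw [← Real.exp_zero]
        apply Real.exp_le_exp.2
        have := h₀pos i; have := hpos n i
        nlinarith
      have h0 := (hs : Summable _).tendsto_cofinite_zero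
      have hev : ∀ᶠ i in cofinite, Real.exp (-s * (ℓ₀ i + ℓ n i)) < 1 := by
        have : Set.Iio (1 : ℝ) ∈ nhds (0 : ℝ) := Iio_mem_nhds (by norm_num)
        exact h0.eventually this
      obtain ⟨i, hi⟩ := (hev.and (Eventually.of_forall h1)).exists
      exact absurd hi.2 (not_le.2 hi.1)
    · push_neg at hs0
      have hmem : s * (2 + ε) ∈ A₀ := by
        refine summable_exp_compare (f := fun i => ℓ₀ i + ℓ n i) (t := s * (2 + ε))
          (fun i => ?_) hs
        show s * (ℓ₀ i + ℓ n i) ≤ s * (2 + ε) * ℓ₀ i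
        have h1 := (hN n hn i).1
        have := h₀pos i
        nlinarith
      have := hlb₀ _ hmem
      rw [div_le_iff₀ h2εpos]
      linarith
  -- upper bound: every s > (1+ε)/(2+ε) belongs to An
  have hup : ∀ s : ℝ, (1 + ε) / (2 + ε) < s → s ∈ An := by
    intro s hsgt
    have hs0 : 0 < s := lt_trans (by positivity) hsgt
    have ht1 : 1 < s * (2 + ε) / (1 + ε) := by
      rw [lt_div_iff₀ hεpos]
      have := (div_lt_iff₀ h2εpos).mp hsgt
      linarith
    refine summable_exp_compare (f := ℓ₀) (s := s * (2 + ε) / (1 + ε))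
      (fun i => ?_) (hmem₀ _ ht1)
    rw [div_mul_eq_mul_div, div_le_iff₀ hεpos]
    have h1 := (hN n hn i).2
    have := h₀pos i
    nlinarith
  have hAnne : An.Nonempty := ⟨(1 + ε) / (2 + ε) + 1, hup _ (by linarith)⟩
  have hAnbdd : BddBelow An := ⟨1 / (2 + ε), hlow⟩
  have hδlow : 1 / (2 + ε) ≤ sInf An := le_csInf hAnne hlow
  have hδup : sInf An ≤ (1 + ε) / (2 + ε) := by
    by_contra h
    push_neg at h
    set m := ((1 + ε) / (2 + ε) + sInf An) / 2 with hm
    have h1 : (1 + ε) / (2 + ε) < m := by rw [hm]; linarith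
    have h2 : m < sInf An := by rw [hm]; linarith
    exact absurd (csInf_le hAnbdd (hup m h1)) (not_le.2 h2)
  -- conclude
  rw [Real.dist_eq, abs_lt]
  constructor
  · have : 1 / 2 - ε < 1 / (2 + ε) := by
      rw [lt_div_iff₀ h2εpos]
      nlinarith
    linarith
  · have : (1 + ε) / (2 + ε) < 1 / 2 + ε := by
      rw [div_lt_iff₀ h2εpos]
      nlinarith
    linarith
end

section
/- Let ι be a countable type, ℓ₁, ℓ₂ : ι → ℝ with ℓ₁ i ≥ 0 for all i, S ⊆ ι a subset, and constants M > 0, η ∈ (0,1), κ > 0. Assume that for every T ≥ 0 the set { i ∈ S | ℓ₁ i ≤ T } is finite with cardinality at most M·exp((1−η)·T), and that ℓ₂ i ≥ κ·ℓ₁ i for all i ∈ S. Then sInf { s | the family i ↦ exp(−s·(ℓ₁ i + ℓ₂ i)), restricted to S, is summable } ≤ (1−η)/(1+κ). -/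
/-- Counting estimate: if the set `S` has counting function at most
`M · e^{(1-η)T}` with respect to `ℓ₁` and `ℓ₂ ≥ κ ℓ₁` on `S`, then the critical
exponent of the restricted Poincaré series is at most `(1-η)/(1+κ)`. -/
theorem restricted_exponent_bound
    (ι : Type*) [Countable ι]
    (ℓ₁ ℓ₂ : ι → ℝ) (h₁ : ∀ i, 0 ≤ ℓ₁ i)
    (S : Set ι) (M η κ : ℝ) (hM : 0 < M) (hη : η ∈ Set.Ioo (0 : ℝ) 1) (hκ : 0 < κ)
    (hfin : ∀ T : ℝ, 0 ≤ T → {i : ι | i ∈ S ∧ ℓ₁ i ≤ T}.Finite)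
    (hcount : ∀ T : ℝ, 0 ≤ T →
      (Nat.card {i : ι | i ∈ S ∧ ℓ₁ i ≤ T} : ℝ) ≤ M * Real.exp ((1 - η) * T))
    (hratio : ∀ i ∈ S, κ * ℓ₁ i ≤ ℓ₂ i) :
    sInf {s : ℝ | Summable fun i : S => Real.exp (-s * (ℓ₁ i.1 + ℓ₂ i.1))} ≤
      (1 - η) / (1 + κ) := by
  classical
  obtain ⟨hη0, hη1⟩ := hη
  set B : ℝ := (1 - η) / (1 + κ) with hB
  have h1κ : (0:ℝ) < 1 + κ := by linarith
  have hBpos : 0 < B := div_pos (by linarith) h1κ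
  -- Main claim: summability for every s > B
  have key : ∀ s : ℝ, B < s →
      Summable fun i : S => Real.exp (-s * (ℓ₁ i.1 + ℓ₂ i.1)) := by
    intro s hs
    have hspos : 0 < s := hBpos.trans hs
    set a : ℝ := s * (1 + κ) with ha
    have hagt : 1 - η < a := by
      have := (div_lt_iff₀ h1κ).mp hs
      linarith [this]
    have hapos : 0 < a := mul_pos hspos h1κ
    set r : ℝ := Real.exp ((1 - η) - a) with hr
    have hr0 : 0 < r := Real.exp_pos _
    have hr1 : r < 1 := by
      rw [hr]
      exact Real.exp_lt_one_iff.mpr (by linarith)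
    set C : ℝ := M * Real.exp (1 - η) * (1 - r)⁻¹ with hC
    -- the geometric series bound
    have geom : ∀ N : ℕ, ∑ n ∈ Finset.range N, r ^ n ≤ (1 - r)⁻¹ := by
      intro N
      have hsum : Summable fun n : ℕ => r ^ n := summable_geometric_of_lt_one hr0.le hr1
      calc ∑ n ∈ Finset.range N, r ^ n ≤ ∑' n : ℕ, r ^ n := by
            apply Summable.sum_le_tsum _ (fun n _ => (pow_pos hr0 n).le) hsum
          _ = (1 - r)⁻¹ := tsum_geometric_of_lt_one hr0.le hr1
    apply summable_of_sum_le (c := C)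
    · intro i
      positivity
    · intro u
      set g : S → ℕ := fun i => ⌊ℓ₁ i.1⌋₊ with hg
      set N : ℕ := u.sup g + 1 with hN
      have hmaps : ∀ i ∈ u, g i ∈ Finset.range N := by
        intro i hi
        exact Finset.mem_range.mpr (Nat.lt_succ_of_le (Finset.le_sup hi))
      -- pointwise bound by exp(-a * g i)
      have hpt : ∀ i : S, Real.exp (-s * (ℓ₁ i.1 + ℓ₂ i.1)) ≤ Real.exp (-a * (g i : ℝ)) := by
        intro i
        apply Real.exp_le_exp.mpr
        have h2 : κ * ℓ₁ i.1 ≤ ℓ₂ i.1 := hratio i.1 i.2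
        have h3 : (g i : ℝ) ≤ ℓ₁ i.1 := Nat.floor_le (h₁ i.1)
        nlinarith [h₁ i.1, hspos.le, hapos.le]
      calc ∑ i ∈ u, Real.exp (-s * (ℓ₁ i.1 + ℓ₂ i.1))
          ≤ ∑ i ∈ u, Real.exp (-a * (g i : ℝ)) := Finset.sum_le_sum fun i _ => hpt i
        _ = ∑ n ∈ Finset.range N, ∑ i ∈ u.filter (fun i => g i = n),
              Real.exp (-a * (g i : ℝ)) :=
            (Finset.sum_fiberwise_of_maps_to hmaps _).symm
        _ ≤ ∑ n ∈ Finset.range N, M * Real.exp (1 - η) * r ^ n := by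
            apply Finset.sum_le_sum
            intro n _
            have hcard : ((u.filter (fun i => g i = n)).card : ℝ)
                ≤ M * Real.exp ((1 - η) * ((n : ℝ) + 1)) := by
              have hT : (0:ℝ) ≤ (n : ℝ) + 1 := by positivity
              have hfinT := hfin ((n : ℝ) + 1) hT
              have hsubset : (u.filter (fun i => g i = n)).image Subtype.val
                  ⊆ hfinT.toFinset := by
                intro x hx
                simp only [Finset.mem_image, Finset.mem_filter] at hx
                obtain ⟨i, ⟨_, hgi⟩, rfl⟩ := hx
                rw [Set.Finite.mem_toFinset]
                refine ⟨i.2, ?_⟩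
                have := Nat.lt_floor_add_one (ℓ₁ i.1)
                rw [hg] at hgi
                have : ℓ₁ i.1 < (n : ℝ) + 1 := by
                  rw [← hgi]; exact Nat.lt_floor_add_one _
                linarith
              have hcard1 : (u.filter (fun i => g i = n)).card
                  = ((u.filter (fun i => g i = n)).image Subtype.val).card :=
                (Finset.card_image_of_injective _ Subtype.val_injective).symm
              have hcard2 : ((u.filter (fun i => g i = n)).image Subtype.val).card
                  ≤ hfinT.toFinset.card := Finset.card_le_card hsubset
              have hcard3 : hfinT.toFinset.card
                  = Nat.card {i : ι | i ∈ S ∧ ℓ₁ i ≤ (n : ℝ) + 1} := by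
                rw [Nat.card_eq_card_finite_toFinset hfinT]
              calc ((u.filter (fun i => g i = n)).card : ℝ)
                  = (((u.filter (fun i => g i = n)).image Subtype.val).card : ℝ) := by
                    rw [hcard1]
                _ ≤ (hfinT.toFinset.card : ℝ) := by exact_mod_cast hcard2
                _ = (Nat.card {i : ι | i ∈ S ∧ ℓ₁ i ≤ (n : ℝ) + 1} : ℝ) := by
                    exact_mod_cast hcard3
                _ ≤ M * Real.exp ((1 - η) * ((n : ℝ) + 1)) := hcount _ hT
            calc ∑ i ∈ u.filter (fun i => g i = n), Real.exp (-a * (g i : ℝ))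
                = ((u.filter (fun i => g i = n)).card : ℝ) * Real.exp (-a * (n : ℝ)) := by
                  rw [Finset.sum_congr rfl (fun i hi => ?_), Finset.sum_const,
                    nsmul_eq_mul]
                  rw [(Finset.mem_filter.mp hi).2]
              _ ≤ M * Real.exp ((1 - η) * ((n : ℝ) + 1)) * Real.exp (-a * (n : ℝ)) := by
                  apply mul_le_mul_of_nonneg_right hcard (Real.exp_pos _).le
              _ = M * Real.exp (1 - η) * r ^ n := by
                  rw [hr, ← Real.exp_nat_mul, mul_assoc, mul_assoc, ← Real.exp_add,
                    ← Real.exp_add]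
                  ring_nf
        _ = M * Real.exp (1 - η) * ∑ n ∈ Finset.range N, r ^ n := by
            rw [Finset.mul_sum]
        _ ≤ C := by
            rw [hC]
            apply mul_le_mul_of_nonneg_left (geom N)
            positivity
  -- now conclude about the infimum
  set A : Set ℝ := {s : ℝ | Summable fun i : S => Real.exp (-s * (ℓ₁ i.1 + ℓ₂ i.1))} with hA
  by_cases hbdd : BddBelow A
  · apply le_of_forall_pos_le_add
    intro ε hε
    have hmem : B + ε ∈ A := key _ (by linarith)
    exact (csInf_le hbdd hmem).trans (by linarith)
  · rw [Real.sInf_of_not_bddBelow hbdd]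
    exact hBpos.le
end
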